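/- Let h^ℝ be a Cartan subalgebra of g^ℝ with θ(h^ℝ) = h^ℝ, write h^ℝ = t^ℝ ⊕ a^ℝ with t^ℝ := {h ∈ h^ℝ : θ(h) = h} and a^ℝ := {h ∈ h^ℝ : θ(h) = -h}, let l^ℝ be the centralizer of a^ℝ in g^ℝ, and let l' := ⁅l^ℝ, l^ℝ⁆ be the derived subalgebra of l^ℝ. Then: (a) θ(l') = l'; (b) the restriction of θ to l' is a Cartan involution of l', i.e., -κ'(x, θ(x)) > 0 for every nonzero x ∈ l', where κ' denotes the Killing form of l'; (c) h^ℝ ∩ l' is a Cartan subalgebra of l' that is pointwise fixed by θ (in particular θ-stable), i.e., it is a compact θ-stable Cartan subalgebra of l'. -/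

import Mathlib

noncomputable section

variable (g : Type*) [LieRing g] [LieAlgebra ℂ g]

/-- `g`, viewed as a Lie algebra over `ℝ` by restriction of scalars. -/
instance : LieAlgebra ℝ g where
  lie_smul t x y := by rw [← smul_one_smul ℂ t y, lie_smul, smul_one_smul]

/-- The real form `g^ℝ = {x | τ x = x}` of `g` determined by a conjugate-linear
involution `τ` preserving brackets, as a real Lie subalgebra of `g`. -/
def realForm (τ : g →ₗ⋆[ℂ] g) (hτbr : ∀ x y : g, τ ⁅x, y⁆ = ⁅τ x, τ y⁆) :
    LieSubalgebra ℝ g where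
  carrier := {x | τ x = x}
  add_mem' := fun {x y} hx hy => by
    simp only [Set.mem_setOf_eq] at *
    rw [map_add, hx, hy]
  zero_mem' := by simp
  smul_mem' := fun t x hx => by
    simp only [Set.mem_setOf_eq] at *
    rw [← smul_one_smul ℂ t x, map_smulₛₗ,
      show ((starRingEnd ℂ) (t • (1 : ℂ))) = t • (1 : ℂ) by simp, hx]
  lie_mem' := fun {x y} hx hy => by
    simp only [Set.mem_setOf_eq] at *
    rw [hτbr, hx, hy]

/-- The simultaneous eigenspace `g_α = {x | ⁅h, x⁆ = α(h) • x for all h ∈ H}` of a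
`ℂ`-linear functional `α` on a Cartan subalgebra `H`. -/
def rootSet (H : LieSubalgebra ℂ g) (α : ↥H →ₗ[ℂ] ℂ) : Set g :=
  {x | ∀ h : ↥H, ⁅(h : g), x⁆ = α h • x}

/-- The centralizer of a subset `s` of a real Lie algebra `L`, as a Lie subalgebra. -/
def lieCentralizer (L : Type*) [LieRing L] [LieAlgebra ℝ L] (s : Set L) :
    LieSubalgebra ℝ L where
  carrier := {x | ∀ y ∈ s, ⁅x, y⁆ = 0}
  add_mem' := fun {x y} hx hy z hz => by rw [add_lie, hx z hz, hy z hz, add_zero]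
  zero_mem' := fun z _ => zero_lie z
  smul_mem' := fun t x hx z hz => by rw [smul_lie, hx z hz, smul_zero]
  lie_mem' := fun {x y} hx hy z hz => by
    rw [lie_lie, hx z hz, hy z hz, lie_zero, lie_zero, sub_zero]

variable (τ : g →ₗ⋆[ℂ] g) (hτbr : ∀ x y : g, τ ⁅x, y⁆ = ⁅τ x, τ y⁆)
  (θ : g →ₗ[ℂ] g) (hR : LieSubalgebra ℝ ↥(realForm g τ hτbr))

/-- `l^ℝ`: the centralizer in `g^ℝ` of `a^ℝ`, where `a^ℝ` is the `-1` eigenspace of `θ`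
on the Cartan subalgebra `h^ℝ` of `g^ℝ`. -/
def lPart : LieSubalgebra ℝ ↥(realForm g τ hτbr) :=
  lieCentralizer ↥(realForm g τ hτbr)
    {x : ↥(realForm g τ hτbr) | x ∈ hR ∧ θ (x : g) = -(x : g)}

/-- `l' = ⁅l^ℝ, l^ℝ⁆`: the derived subalgebra of `l^ℝ`. -/
def lDer : LieIdeal ℝ ↥(lPart g τ hτbr θ hR) :=
  LieAlgebra.derivedSeries ℝ ↥(lPart g τ hτbr θ hR) 1

/-- The realization of elements of `l'` as elements of `g`. -/
def embDer (x : ↥(lDer g τ hτbr θ hR)) : g :=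
  (((x : ↥(lPart g τ hτbr θ hR)) : ↥(realForm g τ hτbr)) : g)


/-!
On the real form, `B(x, y) = Re (-κ(x, θ y))` is an inner product for which `-ad (θ z)` is the
adjoint of `ad z`. For a Lie algebra with such a form the center is the orthogonal complement of
the derived algebra, so `l = 𝔷(l) ⊕ l'` and `l'` has trivial center. For `x ∈ l'` the operators
`ad x` and `-ad (θ x)` on `l'` are adjoint, so `κ'(x, θ x) = -‖ad (θ x)‖² < 0`.
For `a ∈ a^ℝ`, `ad a` is self-adjoint and nilpotent on `h^ℝ`, hence zero; so `h^ℝ ⊆ l`, where it is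
a Cartan subalgebra. The center of `l` lies in `h^ℝ`, which makes `h^ℝ ∩ l'` a Cartan subalgebra
of `l' ≅ l / 𝔷(l)`. Finally, for `h ∈ h^ℝ ∩ l'`, `h - θ h` lies in `a^ℝ ⊆ 𝔷(l)` and in `l'`,
hence vanishes.
-/

open LinearMap (BilinForm)

theorem Function.Involutive.image_eq_of_mapsTo {α : Type*} {f : α → α} (hf : f.Involutive)
    {s : Set α} (hs : Set.MapsTo f s s) : f '' s = s :=
  hs.image_subset.antisymm fun x hx => ⟨f x, hs hx, hf x⟩

theorem LinearMap.BilinForm.trace_comp_lt_zero_of_apply_eq_neg {V : Type*} [AddCommGroup V]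
    [Module ℝ V] [FiniteDimensional ℝ V] {Φ : BilinForm ℝ V} (hsymm : Φ.IsSymm)
    (hpos : ∀ v, v ≠ 0 → 0 < Φ v v) {A B : V →ₗ[ℝ] V}
    (hAB : ∀ u v, Φ (A u) v = -Φ u (B v)) (hB : B ≠ 0) :
    LinearMap.trace ℝ V (A ∘ₗ B) < 0 := by
  have hnonneg : ∀ v, 0 ≤ Φ v v := fun v => by
    rcases eq_or_ne v 0 with rfl | hv
    · simp
    · exact (hpos v hv).le
  let core : InnerProductSpace.Core ℝ V :=
    { inner := fun u v => Φ u v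
      conj_inner_symm := fun u v => hsymm.eq v u
      re_inner_nonneg := hnonneg
      add_left := fun u v w => by simp
      smul_left := fun u v r => by simp
      definite := fun v hv => by_contra fun h => (hpos v h).ne' hv }
  let _ := core.toNormedAddCommGroup
  let _ := InnerProductSpace.ofCore core.toCore
  let e := stdOrthonormalBasis ℝ V
  obtain ⟨i, hi⟩ : ∃ i, B (e i) ≠ 0 := by
    by_contra! h
    exact hB (e.toBasis.ext fun i => by simpa using h i)
  have hdiag : ∀ j, Φ (e j) (A (B (e j))) = -Φ (B (e j)) (B (e j)) := fun j => by
    rw [hsymm.eq, hAB, hsymm.eq]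
  rw [LinearMap.trace_eq_sum_inner _ e]
  change ∑ j, Φ (e j) (A (B (e j))) < 0
  simp only [hdiag, Finset.sum_neg_distrib, neg_lt_zero]
  exact Finset.sum_pos' (fun j _ => hnonneg _) ⟨i, Finset.mem_univ i, hpos _ hi⟩

section LieAlgebra

variable {R L L' : Type*} [CommRing R] [LieRing L] [LieAlgebra R L] [LieRing L'] [LieAlgebra R L']

def LieHom.restrict (σ : L →ₗ⁅R⁆ L) (K : LieSubalgebra R L) (hK : ∀ x ∈ K, σ x ∈ K) :
    K →ₗ⁅R⁆ K :=
  { σ.toLinearMap.restrict hK with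
    map_lie' := fun {x y} => Subtype.ext (σ.map_lie x y) }

theorem LieHom.map_mem_derivedSeries (f : L →ₗ⁅R⁆ L') {k : ℕ} {x : L}
    (hx : x ∈ LieAlgebra.derivedSeries R L k) : f x ∈ LieAlgebra.derivedSeries R L' k :=
  LieIdeal.derivedSeries_map_le k (LieIdeal.mem_map (f := f) hx)

namespace LieSubalgebra

theorem isNilpotent_comap {f : L' →ₗ⁅R⁆ L} (hf : Function.Injective f) (H : LieSubalgebra R L)
    [LieRing.IsNilpotent H] : LieRing.IsNilpotent (H.comap f) := by
  let e : H.comap f →ₗ⁅R⁆ H :=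
    { toFun x := ⟨f x, x.2⟩
      map_add' x y := Subtype.ext (f.map_add x y)
      map_smul' t x := Subtype.ext (f.map_smul t x)
      map_lie' {x y} := Subtype.ext (f.map_lie x y) }
  exact Function.Injective.lieAlgebra_isNilpotent (f := e)
    fun x y hxy => Subtype.ext (hf (congrArg Subtype.val hxy))

theorem mem_of_mem_center (H : LieSubalgebra R L) [H.IsCartanSubalgebra] {z : L}
    (hz : z ∈ LieAlgebra.center R L) : z ∈ H := by
  rw [← IsCartanSubalgebra.self_normalizing (H := H), mem_normalizer_iff]
  intro y _
  rw [← lie_skew, hz y, neg_zero]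
  exact H.zero_mem

theorem isCartanSubalgebra_comap_incl_of_le (H : LieSubalgebra R L) [H.IsCartanSubalgebra]
    {K : LieSubalgebra R L} (hHK : H ≤ K) : (H.comap K.incl).IsCartanSubalgebra where
  nilpotent := isNilpotent_comap Subtype.val_injective H
  self_normalizing := by
    refine le_antisymm (fun x hx => ?_) (le_normalizer _)
    rw [mem_normalizer_iff] at hx
    change (x : L) ∈ H
    rw [← IsCartanSubalgebra.self_normalizing (H := H), mem_normalizer_iff]
    exact fun y hy => hx ⟨y, hHK hy⟩ hy

theorem isCartanSubalgebra_comap_incl_of_sup_eq_top (H : LieSubalgebra R L)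
    [H.IsCartanSubalgebra] {D : LieIdeal R L} (hD : LieAlgebra.center R L ⊔ D = ⊤) :
    (H.comap D.incl).IsCartanSubalgebra where
  nilpotent := isNilpotent_comap D.injective_incl H
  self_normalizing := by
    refine le_antisymm (fun x hx => ?_) (le_normalizer _)
    rw [mem_normalizer_iff] at hx
    change (x : L) ∈ H
    rw [← IsCartanSubalgebra.self_normalizing (H := H), mem_normalizer_iff]
    intro k hk
    obtain ⟨z, hz, d, hd, rfl⟩ := (LieSubmodule.mem_sup _ _ k).mp (hD ▸ LieSubmodule.mem_top k)
    have hdH : d ∈ H := by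
      simpa using H.sub_mem hk (H.mem_of_mem_center hz)
    rw [lie_add, hz, zero_add]
    exact hx ⟨d, hd⟩ hdH

end LieSubalgebra

end LieAlgebra

section CartanForm

variable {L : Type*} [LieRing L] [LieAlgebra ℝ L]

/-- The abstract counterpart of `B_θ(x, y) = -κ(x, θ y)` for a Cartan involution `θ`:
a positive definite symmetric form for which `-ad (σ z)` is the adjoint of `ad z`. -/
structure IsCartanForm (σ : L →ₗ⁅ℝ⁆ L) (Φ : BilinForm ℝ L) : Prop where
  involutive : Function.Involutive σ
  isSymm : Φ.IsSymm
  pos : ∀ v, v ≠ 0 → 0 < Φ v v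
  lie_left : ∀ z u v, Φ ⁅z, u⁆ v = -Φ u ⁅σ z, v⁆

namespace IsCartanForm

open LieAlgebra

variable {σ : L →ₗ⁅ℝ⁆ L} {Φ : BilinForm ℝ L} (hΦ : IsCartanForm σ Φ)
include hΦ

theorem comp {K : Type*} [LieRing K] [LieAlgebra ℝ K] {f : K →ₗ⁅ℝ⁆ L}
    (hf : Function.Injective f) {σK : K →ₗ⁅ℝ⁆ K} (hσK : ∀ x, f (σK x) = σ (f x)) :
    IsCartanForm σK (Φ.compl₁₂ (f : K →ₗ[ℝ] L) f) where
  involutive x := hf (by rw [hσK, hσK, hΦ.involutive])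
  isSymm := ⟨fun u v => hΦ.isSymm.eq (f u) (f v)⟩
  pos v hv := hΦ.pos (f v) fun h => hv (hf (h.trans f.map_zero.symm))
  lie_left z u v := by
    simp only [LinearMap.compl₁₂_apply, LieHom.coe_toLinearMap, LieHom.map_lie, hσK]
    exact hΦ.lie_left _ _ _

theorem eq_zero_of_forall_apply_eq_zero {v : L} (hv : ∀ u, Φ u v = 0) : v = 0 :=
  by_contra fun h => (hΦ.pos v h).ne' (hv v)

theorem toSubmodule_center_eq_orthogonal :
    (center ℝ L).toSubmodule = Φ.orthogonal (derivedSeries ℝ L 1).toSubmodule := by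
  ext z
  rw [LieSubmodule.mem_toSubmodule, LieModule.mem_maxTrivSubmodule,
    LinearMap.BilinForm.mem_orthogonal_iff, ← LieIdeal.toLieSubalgebra_toSubmodule,
    coe_derivedSeries_one_eq]
  constructor
  · intro hz n hn
    refine Submodule.span_le (p := LinearMap.ker (Φ.flip z)) |>.mpr ?_ hn
    rintro _ ⟨x, y, rfl⟩
    simp [hΦ.lie_left, hz]
  · intro hz x
    refine hΦ.eq_zero_of_forall_apply_eq_zero fun u => ?_
    have := hz _ (Submodule.subset_span ⟨σ x, u, rfl⟩)
    rwa [hΦ.lie_left, hΦ.involutive, neg_eq_zero] at this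

theorem trace_ad_comp_ad_lt_zero (K : LieSubalgebra ℝ L) [FiniteDimensional ℝ K] {x y : K}
    (hxy : (y : L) = σ x) (hy : ad ℝ K y ≠ 0) :
    LinearMap.trace ℝ K (ad ℝ K x ∘ₗ ad ℝ K y) < 0 := by
  refine (Φ.restrict K.toSubmodule).trace_comp_lt_zero_of_apply_eq_neg
    ⟨fun u v => hΦ.isSymm.eq u v⟩ (fun v hv => hΦ.pos v (by simpa using hv)) (fun u v => ?_) hy
  change Φ ⁅(x : L), u⁆ v = -Φ u ⁅(y : L), v⁆
  rw [hxy, hΦ.lie_left]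

/-- `ad a` is self-adjoint and nilpotent on `H`, hence zero. -/
theorem lie_eq_zero_of_eq_neg {H : LieSubalgebra ℝ L} [FiniteDimensional ℝ H]
    [LieRing.IsNilpotent H] {a : L} (ha : a ∈ H) (hσa : σ a = -a) {h : L} (hh : h ∈ H) :
    ⁅h, a⁆ = 0 := by
  let a' : H := ⟨a, ha⟩
  have hnil : IsNilpotent (ad ℝ H a' ∘ₗ ad ℝ H a') :=
    (Commute.refl _).isNilpotent_mul_left (LieModule.isNilpotent_toEnd_of_isNilpotent ℝ H H a')
  have htrace : LinearMap.trace ℝ H (ad ℝ H a' ∘ₗ ad ℝ H (-a')) = 0 := by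
    rw [map_neg, LinearMap.comp_neg, map_neg,
      (LinearMap.isNilpotent_trace_of_isNilpotent hnil).eq_zero, neg_zero]
  by_contra hne
  refine (hΦ.trace_ad_comp_ad_lt_zero H (x := a') (y := -a') hσa.symm fun h0 => hne ?_).ne htrace
  have := congrArg Subtype.val (LinearMap.congr_fun h0 ⟨h, hh⟩)
  rw [ad_apply, neg_lie, ← lie_skew, neg_neg] at this
  exact this

variable [FiniteDimensional ℝ L]

theorem isCompl_derivedSeries_center : IsCompl (derivedSeries ℝ L 1) (center ℝ L) := by
  rw [← LieSubmodule.isCompl_toSubmodule, hΦ.toSubmodule_center_eq_orthogonal]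
  refine (LinearMap.BilinForm.isCompl_orthogonal_iff_disjoint hΦ.isSymm.isRefl).mpr ?_
  refine Submodule.disjoint_def.mpr fun v hv hv' => by_contra fun h => ?_
  exact (hΦ.pos v h).ne' (hv' v hv)

theorem center_derivedSeries_eq_bot : center ℝ (derivedSeries ℝ L 1) = ⊥ := by
  have hcompl := hΦ.isCompl_derivedSeries_center
  refine (LieSubmodule.eq_bot_iff _).mpr fun c hc => ?_
  have hcZ : (c : L) ∈ center ℝ L := fun x => by
    obtain ⟨d, hd, z, hz, rfl⟩ := (LieSubmodule.mem_sup _ _ x).mp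
      (hcompl.codisjoint.eq_top ▸ LieSubmodule.mem_top x)
    have hdc : ⁅d, (c : L)⁆ = 0 := congrArg Subtype.val (hc ⟨d, hd⟩)
    rw [add_lie, hdc, ← lie_skew, hz, neg_zero, zero_add]
  exact Subtype.ext (hcompl.disjoint.le_bot ⟨c.2, hcZ⟩)

theorem map_eq_self_of_sub_mem_center {x : L} (hx : x ∈ derivedSeries ℝ L 1)
    (hc : x - σ x ∈ center ℝ L) : σ x = x :=
  (sub_eq_zero.mp (hΦ.isCompl_derivedSeries_center.disjoint.le_bot
    ⟨sub_mem hx (σ.map_mem_derivedSeries hx), hc⟩)).symm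

theorem killingForm_lt_zero {I : LieIdeal ℝ L} (hI : center ℝ I = ⊥) {x y : I}
    (hxy : (y : L) = σ x) (hx : x ≠ 0) : killingForm ℝ I x y < 0 := by
  have hy : y ≠ 0 := fun h => hx <| Subtype.ext <| hΦ.involutive.injective <| by
    rw [← hxy, h, ZeroMemClass.coe_zero, map_zero]
  have had : ad ℝ I y ≠ 0 := fun h => hy <| (LieSubmodule.eq_bot_iff _).mp hI y fun u => by
    rw [← lie_skew, ← ad_apply (R := ℝ), h, LinearMap.zero_apply, neg_zero]
  rw [killingForm_apply_apply]
  exact hΦ.trace_ad_comp_ad_lt_zero I hxy had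

end IsCartanForm

end CartanForm

section Centralizer

variable {L : Type*} [LieRing L] [LieAlgebra ℝ L] {S : Set L}

theorem mem_center_lieCentralizer {x : lieCentralizer L S} (hx : (x : L) ∈ S) :
    x ∈ LieAlgebra.center ℝ (lieCentralizer L S) :=
  fun y => Subtype.ext (y.2 x hx)

theorem LieHom.map_mem_lieCentralizer (σ : L →ₗ⁅ℝ⁆ L) (hS : ∀ y ∈ S, σ y = -y) {x : L}
    (hx : x ∈ lieCentralizer L S) : σ x ∈ lieCentralizer L S := fun y hy => by
  have := σ.map_lie x y
  rw [hx y hy, map_zero, hS y hy, lie_neg] at this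
  exact neg_eq_zero.mp this.symm

abbrev LieHom.restrictLieCentralizer (σ : L →ₗ⁅ℝ⁆ L) (hS : ∀ y ∈ S, σ y = -y) :
    lieCentralizer L S →ₗ⁅ℝ⁆ lieCentralizer L S :=
  σ.restrict _ fun _ => σ.map_mem_lieCentralizer hS

namespace IsCartanForm

variable {σ : L →ₗ⁅ℝ⁆ L} {Φ : BilinForm ℝ L} (hΦ : IsCartanForm σ Φ)
include hΦ

theorem restrictLieCentralizer (hS : ∀ y ∈ S, σ y = -y) :
    IsCartanForm (σ.restrictLieCentralizer hS)
      (Φ.compl₁₂ (lieCentralizer L S).incl.toLinearMap (lieCentralizer L S).incl.toLinearMap) :=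
  hΦ.comp Subtype.val_injective fun _ => rfl

variable [FiniteDimensional ℝ L] {H : LieSubalgebra ℝ L}

theorem le_lieCentralizer [LieRing.IsNilpotent H] (hSH : S ⊆ H) (hS : ∀ y ∈ S, σ y = -y) :
    H ≤ lieCentralizer L S :=
  fun _ hx y hy => hΦ.lie_eq_zero_of_eq_neg (hSH hy) (hS y hy) hx

theorem map_eq_self_of_mem_derivedSeries (hHσ : ∀ x ∈ H, σ x ∈ H)
    (hS : ∀ y ∈ S, σ y = -y) (hHS : ∀ x ∈ H, σ x = -x → x ∈ S) {x : lieCentralizer L S}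
    (hxD : x ∈ LieAlgebra.derivedSeries ℝ (lieCentralizer L S) 1) (hxH : (x : L) ∈ H) :
    σ x = x := by
  refine congrArg Subtype.val ((hΦ.restrictLieCentralizer hS).map_eq_self_of_sub_mem_center hxD
    (mem_center_lieCentralizer (hHS _ (H.sub_mem hxH (hHσ _ hxH)) ?_)))
  change σ (x - σ x) = -(x - σ x)
  rw [map_sub, hΦ.involutive, neg_sub]

end IsCartanForm

end Centralizer

section RealForm

variable {g τ hτbr θ}

theorem map_mem_realForm (hθτ : ∀ x, θ (τ x) = τ (θ x)) {x : g} (hx : x ∈ realForm g τ hτbr) :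
    θ x ∈ realForm g τ hτbr := by
  change τ (θ x) = θ x
  rw [← hθτ, show τ x = x from hx]

variable (g τ hτbr θ) in
def cartanInvolution (hθbr : ∀ x y : g, θ ⁅x, y⁆ = ⁅θ x, θ y⁆)
    (hθτ : ∀ x, θ (τ x) = τ (θ x)) : realForm g τ hτbr →ₗ⁅ℝ⁆ realForm g τ hτbr where
  toFun x := ⟨θ x, map_mem_realForm hθτ x.2⟩
  map_add' x y := Subtype.ext (θ.map_add x y)
  map_smul' t x := Subtype.ext (θ.map_smul_of_tower t x)
  map_lie' {x y} := Subtype.ext (hθbr x y)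

variable (g τ hτbr θ) in
def cartanForm : BilinForm ℝ (realForm g τ hτbr) :=
  LinearMap.mk₂ ℝ (fun u v => (-killingForm ℂ g u (θ v)).re)
    (fun u u' v => by simp [add_comm]) (fun t u v => by simp) (fun u v v' => by simp [add_comm])
    (fun t u v => by simp)

theorem isCartanForm_cartanForm (hθ2 : ∀ x, θ (θ x) = x)
    (hθbr : ∀ x y : g, θ ⁅x, y⁆ = ⁅θ x, θ y⁆) (hθτ : ∀ x, θ (τ x) = τ (θ x))
    (hpos : ∀ x : g, τ x = x → x ≠ 0 → 0 < (-(killingForm ℂ g x (θ x))).re) :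
    IsCartanForm (cartanInvolution g τ hτbr θ hθbr hθτ) (cartanForm g τ hτbr θ) where
  involutive x := Subtype.ext (hθ2 x)
  isSymm := by
    let θℂ : g ≃ₗ⁅ℂ⁆ g :=
      .ofBijective { θ with map_lie' := hθbr _ _ } (Function.Involutive.bijective hθ2)
    refine ⟨fun u v => ?_⟩
    change (-killingForm ℂ g u (θ v)).re = (-killingForm ℂ g v (θ u)).re
    rw [← LieAlgebra.killingForm_of_equiv_apply θℂ u]
    change (-killingForm ℂ g (θ u) (θ (θ v))).re = _
    rw [hθ2, LieModule.traceForm_comm]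
  pos v hv := hpos v v.2 fun h => hv (Subtype.ext h)
  lie_left z u v := by
    change (-killingForm ℂ g ⁅(z : g), u⁆ (θ v)).re = -(-killingForm ℂ g u (θ ⁅θ z, v⁆)).re
    rw [hθbr, hθ2, LieModule.traceForm_apply_lie_apply', neg_neg, Complex.neg_re, neg_neg]

end RealForm

theorem image_embDer_comap :
    embDer g τ hτbr θ hR ''
        ((hR.comap (lPart g τ hτbr θ hR).incl).comap (lDer g τ hτbr θ hR).incl : Set _) =
      Subtype.val '' (hR : Set (realForm g τ hτbr)) ∩ Set.range (embDer g τ hτbr θ hR) := by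
  ext w
  constructor
  · rintro ⟨x, hx, rfl⟩
    exact ⟨⟨_, hx, rfl⟩, x, rfl⟩
  · rintro ⟨⟨u, hu, rfl⟩, x, hx⟩
    refine ⟨x, ?_, hx⟩
    change ((x : lPart g τ hτbr θ hR) : realForm g τ hτbr) ∈ hR
    rwa [(Subtype.ext hx : ((x : lPart g τ hτbr θ hR) : realForm g τ hτbr) = u)]

theorem statement18 [FiniteDimensional ℂ g]
    (hθ2 : ∀ x, θ (θ x) = x)
    (hθbr : ∀ x y : g, θ ⁅x, y⁆ = ⁅θ x, θ y⁆)
    (hθτ : ∀ x, θ (τ x) = τ (θ x))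
    (hpos : ∀ x : g, τ x = x → x ≠ 0 → 0 < (-(killingForm ℂ g x (θ x))).re)
    (hRcartan : hR.IsCartanSubalgebra)
    (hRstable : ∀ x : ↥(realForm g τ hτbr), x ∈ hR →
        ∃ y : ↥(realForm g τ hτbr), y ∈ hR ∧ θ (x : g) = (y : g)) :
    -- (a) `θ(l') = l'`
    ⇑θ '' Set.range (embDer g τ hτbr θ hR) = Set.range (embDer g τ hτbr θ hR) ∧
    -- (b) `θ` restricted to `l'` is a Cartan involution: `-κ'(x, θ(x)) > 0` for `x ≠ 0`
    (∀ x y : ↥(lDer g τ hτbr θ hR),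
        θ (embDer g τ hτbr θ hR x) = embDer g τ hτbr θ hR y → x ≠ 0 →
        0 < -(killingForm ℝ ↥(lDer g τ hτbr θ hR) x y)) ∧
    -- (c) `h^ℝ ∩ l'` is a compact `θ`-stable Cartan subalgebra of `l'`
    (∃ hC : LieSubalgebra ℝ ↥(lDer g τ hτbr θ hR), hC.IsCartanSubalgebra ∧
        embDer g τ hτbr θ hR '' (hC : Set ↥(lDer g τ hτbr θ hR))
          = (Subtype.val '' (hR : Set ↥(realForm g τ hτbr)))
              ∩ Set.range (embDer g τ hτbr θ hR) ∧
        (∀ x : ↥(lDer g τ hτbr θ hR), x ∈ hC →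
            θ (embDer g τ hτbr θ hR x) = embDer g τ hτbr θ hR x)) := by
  set σ := cartanInvolution g τ hτbr θ hθbr hθτ
  have hΦ : IsCartanForm σ (cartanForm g τ hτbr θ) := isCartanForm_cartanForm hθ2 hθbr hθτ hpos
  have hS : ∀ y ∈ {x : realForm g τ hτbr | x ∈ hR ∧ θ (x : g) = -(x : g)}, σ y = -y :=
    fun y hy => Subtype.ext hy.2
  have hHσ : ∀ x ∈ hR, σ x ∈ hR := fun x hx => by
    obtain ⟨y, hy, hxy⟩ := hRstable x hx
    exact (Subtype.ext hxy : σ x = y) ▸ hy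
  have hΦl := hΦ.restrictLieCentralizer hS
  have : (hR.comap (lPart g τ hτbr θ hR).incl).IsCartanSubalgebra :=
    hR.isCartanSubalgebra_comap_incl_of_le (hΦ.le_lieCentralizer (fun _ hy => hy.1) hS)
  refine ⟨?_, fun x y hxy hx => ?_, _, LieSubalgebra.isCartanSubalgebra_comap_incl_of_sup_eq_top _
    hΦl.isCompl_derivedSeries_center.symm.sup_eq_top, image_embDer_comap g τ hτbr θ hR,
    fun x hx => ?_⟩
  · refine Function.Involutive.image_eq_of_mapsTo hθ2 ?_
    rintro _ ⟨x, rfl⟩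
    exact ⟨⟨_, (σ.restrictLieCentralizer hS).map_mem_derivedSeries x.2⟩, rfl⟩
  · exact neg_pos.mpr (hΦl.killingForm_lt_zero hΦl.center_derivedSeries_eq_bot
      (Subtype.ext (Subtype.ext hxy)).symm hx)
  · exact congrArg Subtype.val (hΦ.map_eq_self_of_mem_derivedSeries hHσ hS
      (fun x hx h => ⟨hx, congrArg Subtype.val h⟩) x.2 hx)
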